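/- For all integers n ≥ 2 and m ≥ 1, the path-width of the corona of the complete graphs K_n and K_m satisfies pw(K_n ∧ K_m) = n + max(0, m − ⌊n/2⌋) − 1. -/

import Mathlib

open SimpleGraph

/-- `X` is a path-decomposition of the graph `G`. -/
def IsPathDecomp {V : Type} {r : ℕ} (G : SimpleGraph V) (X : Fin r → Finset V) : Prop :=
  (∀ v : V, ∃ i, v ∈ X i) ∧
  (∀ v w : V, G.Adj v w → ∃ i, v ∈ X i ∧ w ∈ X i) ∧
  (∀ i j l : Fin r, i < j → j < l → ∀ x, x ∈ X i → x ∈ X l → x ∈ X j)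

/-- The path-width of `G`: the minimum over all path-decompositions of
(maximum bag size − 1). -/
noncomputable def pathwidth {V : Type} (G : SimpleGraph V) : ℕ :=
  sInf { k | ∃ (r : ℕ) (X : Fin r → Finset V),
    IsPathDecomp G X ∧ sSup (Set.range fun i => (X i).card) - 1 = k }

/-- `corona G₁ G₂` is the corona `G₁ ∧ G₂`: the disjoint union of one copy of `G₁` and
`|V(G₁)|` copies of `G₂`, where each vertex `a` of `G₁` is joined by an edge to every
vertex of the `a`-th copy of `G₂`. -/
def corona {V₁ V₂ : Type} (G₁ : SimpleGraph V₁) (G₂ : SimpleGraph V₂) :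
    SimpleGraph (V₁ ⊕ V₁ × V₂) where
  Adj x y :=
    match x, y with
    | .inl a, .inl b => G₁.Adj a b
    | .inl a, .inr p => a = p.1
    | .inr p, .inl a => a = p.1
    | .inr p, .inr q => p.1 = q.1 ∧ G₂.Adj p.2 q.2
  symm := by
    constructor
    rintro (a | a) (b | b) h <;> simp_all [SimpleGraph.adj_comm, eq_comm]
  loopless := by
    constructor
    rintro (a | a) h <;> simp_all

/-!
The `n` apices form a clique, so some bag `s` contains all of them, and each apex `a` together
with its copy of `K_m` is a clique, so it lies in some bag `t a`. At least `⌈n/2⌉` of the bags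
`t a` lie on the same side of `s`, say after it; by the interval property, the earliest of them
contains its own copy of `K_m` and all these `⌈n/2⌉` apices. Hence some bag has at least
`max(n, m + ⌈n/2⌉)` vertices.

Conversely, put all apices in a middle bag and give each copy a bag of its own, those of the
first `⌈n/2⌉` apices to the left of the middle and the others to the right, and let each apex
stretch from the bag of its copy to the middle. Every bag other than the middle one then
contains one copy and at most `⌈n/2⌉` apices.
-/

open Finset

section PathDecomp

variable {V : Type} {G : SimpleGraph V} {r : ℕ} {X : Fin r → Finset V}

theorem IsPathDecomp.mem_of_le_of_le (hX : IsPathDecomp G X) {i j l : Fin r}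
    (hij : i ≤ j) (hjl : j ≤ l) {x : V} (hi : x ∈ X i) (hl : x ∈ X l) : x ∈ X j := by
  rcases hij.eq_or_lt with rfl | hij
  · exact hi
  rcases hjl.eq_or_lt with rfl | hjl
  · exact hl
  exact hX.2.2 i j l hij hjl x hi hl

theorem IsPathDecomp.rev (hX : IsPathDecomp G X) : IsPathDecomp G fun i => X i.rev := by
  refine ⟨fun v => ?_, fun v w hvw => ?_, fun i j l hij hjl x hi hl => ?_⟩
  · obtain ⟨i, hi⟩ := hX.1 v
    exact ⟨i.rev, by simpa using hi⟩
  · obtain ⟨i, hi⟩ := hX.2.1 v w hvw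
    exact ⟨i.rev, by simpa using hi⟩
  · exact hX.2.2 l.rev j.rev i.rev (Fin.rev_lt_rev.2 hjl) (Fin.rev_lt_rev.2 hij) x hl hi

/-- Helly property of intervals: the bag where the last-starting vertex of the clique first
appears already contains every other vertex of the clique. -/
theorem IsPathDecomp.exists_superset_of_isClique (hX : IsPathDecomp G X) {S : Finset V}
    (hS : G.IsClique (S : Set V)) (hne : S.Nonempty) : ∃ p, S ⊆ X p := by
  classical
  have hbags : ∀ v, ({i | v ∈ X i} : Finset (Fin r)).Nonempty := fun v => by
    simpa [Finset.Nonempty] using hX.1 v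
  let first v := ({i | v ∈ X i} : Finset (Fin r)).min' (hbags v)
  have mem_first v : v ∈ X (first v) := by simpa using min'_mem _ (hbags v)
  obtain ⟨v₀, hv₀, hmax⟩ := S.exists_max_image first hne
  refine ⟨first v₀, fun w hw => ?_⟩
  by_cases hwv : w = v₀
  · exact hwv ▸ mem_first v₀
  obtain ⟨k, hv₀k, hwk⟩ := hX.2.1 v₀ w (hS hv₀ hw (Ne.symm hwv))
  exact hX.mem_of_le_of_le (hmax w hw) (min'_le _ k (by simpa using hv₀k)) (mem_first w) hwk

theorem pathwidth_le {k : ℕ} (hX : IsPathDecomp G X) (hcard : ∀ i, #(X i) ≤ k + 1) :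
    pathwidth G ≤ k := by
  have hwidth : sSup (Set.range fun i => #(X i)) ≤ k + 1 :=
    csSup_le' (Set.forall_mem_range.2 hcard)
  have hmem : sSup (Set.range fun i => #(X i)) - 1 ∈
      {k | ∃ (r : ℕ) (X : Fin r → Finset V),
        IsPathDecomp G X ∧ sSup (Set.range fun i => #(X i)) - 1 = k} := ⟨r, X, hX, rfl⟩
  exact (Nat.sInf_le hmem).trans (by omega)

theorem isPathDecomp_univ [Fintype V] : IsPathDecomp G fun _ : Fin 1 => (univ : Finset V) :=
  ⟨fun _ => ⟨0, mem_univ _⟩, fun _ _ _ => ⟨0, mem_univ _, mem_univ _⟩,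
    fun i j _ hij hjl => absurd (hij.trans hjl) (by omega)⟩

theorem le_pathwidth [Fintype V] {k : ℕ}
    (h : ∀ (r : ℕ) (X : Fin r → Finset V), IsPathDecomp G X → ∃ i, k + 1 ≤ #(X i)) :
    k ≤ pathwidth G := by
  refine le_csInf ⟨_, 1, fun _ => univ, isPathDecomp_univ, rfl⟩ ?_
  rintro _ ⟨r, X, hX, rfl⟩
  obtain ⟨i, hi⟩ := h r X hX
  have : #(X i) ≤ sSup (Set.range fun i => #(X i)) :=
    le_csSup (Set.finite_range _).bddAbove ⟨i, rfl⟩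
  omega

def intervalBags [Fintype V] (lo hi : V → ℕ) (p : ℕ) : Finset V :=
  {v | lo v ≤ p ∧ p ≤ hi v}

@[simp]
theorem mem_intervalBags [Fintype V] {lo hi : V → ℕ} {p : ℕ} {v : V} :
    v ∈ intervalBags lo hi p ↔ lo v ≤ p ∧ p ≤ hi v := by
  simp [intervalBags]

theorem isPathDecomp_intervalBags [Fintype V] {lo hi : V → ℕ} (hlo : ∀ v, lo v ≤ hi v)
    (hhi : ∀ v, hi v < r) (hadj : ∀ v w, G.Adj v w → lo v ≤ hi w) :
    IsPathDecomp G fun p : Fin r => intervalBags lo hi p := by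
  refine ⟨fun v => ⟨⟨lo v, (hlo v).trans_lt (hhi v)⟩, ?_⟩, fun v w hvw => ?_, ?_⟩
  · simpa using hlo v
  · have := hlo v; have := hlo w; have := hadj v w hvw; have := hadj w v hvw.symm
    refine ⟨⟨max (lo v) (lo w), by have := hhi v; omega⟩, ?_, ?_⟩ <;>
      simp only [mem_intervalBags] <;> omega
  · intro i j l hij hjl x hi hl
    simp only [mem_intervalBags, Fin.lt_def] at hi hl hij hjl ⊢
    omega

end PathDecomp

section Corona

open Sum

variable {V₁ V₂ : Type} {G₁ : SimpleGraph V₁} {G₂ : SimpleGraph V₂}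

theorem isClique_corona_map_inl {S : Finset V₁} (hS : G₁.IsClique (S : Set V₁)) :
    (corona G₁ G₂).IsClique
      ((S.map .inl : Finset (V₁ ⊕ V₁ × V₂)) : Set (V₁ ⊕ V₁ × V₂)) := by
  rw [coe_map]
  rintro _ ⟨a, ha, rfl⟩ _ ⟨b, hb, rfl⟩ hab
  exact hS ha hb fun h => hab (congrArg _ h)

theorem isClique_corona_copy {T : Set V₂} (hT : G₂.IsClique T) (a : V₁) :
    (corona G₁ G₂).IsClique (insert (inl a) ((fun v => inr (a, v)) '' T)) := by
  refine IsClique.insert ?_ ?_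
  · rintro _ ⟨v, hv, rfl⟩ _ ⟨w, hw, rfl⟩ hvw
    exact ⟨rfl, hT hv hw fun h => hvw (by rw [h])⟩
  · rintro _ ⟨v, -, rfl⟩ -
    exact rfl

theorem IsPathDecomp.exists_copy_bag {r : ℕ} {X : Fin r → Finset (V₁ ⊕ V₁ × V₂)}
    (hX : IsPathDecomp (corona G₁ G₂) X) {T : Finset V₂} (hT : G₂.IsClique (T : Set V₂))
    (a : V₁) : ∃ t, inl a ∈ X t ∧ ∀ v ∈ T, inr (a, v) ∈ X t := by
  classical
  obtain ⟨t, ht⟩ := hX.exists_superset_of_isClique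
    (S := insert (inl a) (T.image fun v => inr (a, v)))
    (by push_cast; exact isClique_corona_copy hT a) (insert_nonempty _ _)
  exact ⟨t, ht (mem_insert_self _ _),
    fun v hv => ht (mem_insert_of_mem (mem_image_of_mem _ hv))⟩

theorem IsPathDecomp.exists_card_add_le_of_le {G : SimpleGraph (V₁ ⊕ V₁ × V₂)} {r : ℕ}
    {X : Fin r → Finset (V₁ ⊕ V₁ × V₂)} (hX : IsPathDecomp G X) {A : Finset V₁}
    (hA : A.Nonempty) (T : Finset V₂) {s : Fin r} (t : V₁ → Fin r)
    (hs : ∀ a ∈ A, inl a ∈ X s) (hst : ∀ a ∈ A, s ≤ t a)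
    (ht : ∀ a, inl a ∈ X (t a) ∧ ∀ v ∈ T, inr (a, v) ∈ X (t a)) :
    ∃ p, #T + #A ≤ #(X p) := by
  obtain ⟨a₀, ha₀, hmin⟩ := A.exists_min_image t hA
  refine ⟨t a₀, ?_⟩
  have hsub : A.disjSum (T.map (.sectR a₀ V₂)) ⊆ X (t a₀) := by
    rintro (a | ⟨a, v⟩) h
    · rw [inl_mem_disjSum] at h
      exact hX.mem_of_le_of_le (hst a₀ ha₀) (hmin a h) (hs a h) (ht a).1
    · obtain ⟨v, hv, hav⟩ := mem_map.1 (inr_mem_disjSum.1 h)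
      obtain ⟨rfl, rfl⟩ := Prod.ext_iff.1 hav
      exact (ht a₀).2 v hv
  simpa [card_disjSum, add_comm] using card_le_card hsub

theorem IsPathDecomp.exists_corona_card_add_le {r : ℕ}
    {X : Fin r → Finset (V₁ ⊕ V₁ × V₂)} (hX : IsPathDecomp (corona G₁ G₂) X)
    {S : Finset V₁} (hS : G₁.IsClique (S : Set V₁)) (hne : S.Nonempty)
    {T : Finset V₂} (hT : G₂.IsClique (T : Set V₂)) :
    ∃ p, #T + (#S - #S / 2) ≤ #(X p) := by
  classical
  obtain ⟨s, hs⟩ := hX.exists_superset_of_isClique (isClique_corona_map_inl hS) hne.map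
  replace hs : ∀ a ∈ S, inl a ∈ X s := fun a ha => hs (mem_map_of_mem _ ha)
  choose t ht using hX.exists_copy_bag hT
  have hsplit := card_filter_add_card_filter_not (s := S) fun a => s ≤ t a
  have hS0 := hne.card_pos
  rcases (by omega : #S - #S / 2 ≤ #{a ∈ S | s ≤ t a} ∨
      #S - #S / 2 ≤ #{a ∈ S | ¬s ≤ t a}) with hbig | hbig
  · obtain ⟨p, hp⟩ := hX.exists_card_add_le_of_le (A := {a ∈ S | s ≤ t a})
      (card_pos.1 (by omega)) T t (fun a ha => hs a (mem_filter.1 ha).1)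
      (fun a ha => (mem_filter.1 ha).2) ht
    exact ⟨p, by omega⟩
  · -- the bags `t a < s` are handled by reversing the decomposition
    obtain ⟨p, hp⟩ := hX.rev.exists_card_add_le_of_le (A := {a ∈ S | ¬s ≤ t a})
      (s := s.rev) (card_pos.1 (by omega)) T (fun a => (t a).rev)
      (fun a ha => by simpa using hs a (mem_filter.1 ha).1)
      (fun a ha => Fin.rev_le_rev.2 (not_le.1 (mem_filter.1 ha).2).le)
      (fun a => by simpa using ht a)
    exact ⟨p.rev, by omega⟩

end Corona

section CoronaComplete

open Sum

/-- The bag of the copy at apex `i`, skipping the middle bag `⌈n/2⌉ = n - n / 2`. -/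
def copyPos (n : ℕ) (i : Fin n) : ℕ := if (i : ℕ) < n - n / 2 then i else i + 1

theorem copyPos_injective (n : ℕ) : Function.Injective (copyPos n) := by
  intro i j h
  simp only [copyPos] at h
  ext
  split_ifs at h <;> omega

theorem copyPos_ne (n : ℕ) (i : Fin n) : copyPos n i ≠ n - n / 2 := by
  unfold copyPos
  split_ifs <;> omega

def coronaLo (n m : ℕ) : Fin n ⊕ Fin n × Fin m → ℕ
  | inl a => min a (n - n / 2)
  | inr q => copyPos n q.1

def coronaHi (n m : ℕ) : Fin n ⊕ Fin n × Fin m → ℕ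
  | inl a => max (n - n / 2) (a + 1)
  | inr q => copyPos n q.1

theorem isPathDecomp_intervalBags_corona (n m : ℕ) :
    IsPathDecomp (corona (⊤ : SimpleGraph (Fin n)) (⊤ : SimpleGraph (Fin m)))
      fun p : Fin (n + 1) => intervalBags (coronaLo n m) (coronaHi n m) p := by
  apply isPathDecomp_intervalBags
  · rintro (a | q) <;> simp only [coronaLo, coronaHi] <;> omega
  · rintro (a | ⟨i, v⟩) <;> simp only [coronaHi, copyPos] <;> (try split_ifs) <;> omega
  · rintro (a | ⟨i, v⟩) (b | ⟨j, w⟩) hadj <;>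
      simp only [corona, coronaLo, coronaHi, copyPos] at hadj ⊢ <;>
      (try split_ifs) <;> omega

theorem card_intervalBags_corona_le (n m p : ℕ) :
    #(intervalBags (coronaLo n m) (coronaHi n m) p) ≤ n + (m - n / 2) := by
  set h := n - n / 2
  let A : Finset (Fin n) := {a | min (a : ℕ) h ≤ p ∧ p ≤ max h (a + 1)}
  let C : Finset (Fin n × Fin m) := {q | copyPos n q.1 = p}
  have hsub : intervalBags (coronaLo n m) (coronaHi n m) p ⊆ A.disjSum C := by
    rintro (a | q) hx <;>
      simp only [mem_intervalBags, coronaLo, coronaHi, inl_mem_disjSum, inr_mem_disjSum,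
        A, C, mem_filter, mem_univ, true_and] at hx ⊢ <;>
      omega
  have hC : #C ≤ m := by
    calc #C ≤ #(univ : Finset (Fin m)) :=
          card_le_card_of_injOn Prod.snd (fun _ _ => mem_univ _) fun q hq q' hq' hqq' =>
            Prod.ext (copyPos_injective n
              ((mem_filter.1 hq).2.trans (mem_filter.1 hq').2.symm)) hqq'
      _ = m := by simp
  have hbag := (card_le_card hsub).trans_eq (card_disjSum A C)
  rcases lt_trichotomy p h with hp | rfl | hp
  · have hA : #A ≤ #(range h) := card_le_card_of_injOn Fin.val
      (fun a ha => by
        simp only [A, coe_filter, mem_univ, true_and, Set.mem_ofPred_eq] at ha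
        simp only [coe_range, Set.mem_Iio]
        omega)
      Fin.val_injective.injOn
    simp only [card_range] at hA
    omega
  · have hC0 : C = ∅ := filter_eq_empty_iff.2 fun q _ => copyPos_ne n q.1
    have hA : #A ≤ n := (card_le_univ A).trans_eq (Fintype.card_fin n)
    rw [hC0, card_empty] at hbag
    omega
  · have hA : #A ≤ #(Ico h n) := card_le_card_of_injOn Fin.val
      (fun a ha => by
        simp only [A, coe_filter, mem_univ, true_and, Set.mem_ofPred_eq] at ha
        simp only [coe_Ico, Set.mem_Ico]
        omega)
      Fin.val_injective.injOn
    simp only [Nat.card_Ico] at hA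
    omega

end CoronaComplete

theorem pathwidth_corona_complete_general (n m : ℕ) (hn : 2 ≤ n) :
    pathwidth (corona (⊤ : SimpleGraph (Fin n)) (⊤ : SimpleGraph (Fin m))) =
      n + max 0 (m - n / 2) - 1 := by
  rw [Nat.zero_max]
  apply le_antisymm
  · exact pathwidth_le (isPathDecomp_intervalBags_corona n m) fun p => by
      have := card_intervalBags_corona_le n m p; omega
  · refine le_pathwidth fun r X hX => ?_
    have hne : (univ : Finset (Fin n)).Nonempty := ⟨⟨0, by omega⟩, mem_univ _⟩
    obtain ⟨s, hs⟩ := hX.exists_superset_of_isClique (isClique_corona_map_inl (IsClique.top _))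
      hne.map
    obtain ⟨p, hp⟩ :=
      hX.exists_corona_card_add_le (IsClique.top _) hne (T := univ) (IsClique.top _)
    have hsn := card_le_card hs
    simp only [card_map, card_univ, Fintype.card_fin] at hsn hp
    rcases le_total m (n / 2) with hmn | hmn
    · exact ⟨s, by omega⟩
    · exact ⟨p, by omega⟩

/-- For `n ≥ 2` and `m ≥ 1`, the path-width of the corona of complete graphs satisfies
`pw(K_n ∧ K_m) = n + max(0, m − ⌊n/2⌋) − 1`. -/
theorem pathwidth_corona_complete (n m : ℕ) (hn : 2 ≤ n) (hm : 1 ≤ m) :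
    pathwidth (corona (⊤ : SimpleGraph (Fin n)) (⊤ : SimpleGraph (Fin m))) =
      n + max 0 (m - n / 2) - 1 :=
  pathwidth_corona_complete_general n m hn
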